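/- arXiv:1808.03864 — 2 statements merged into one kernel-verified Lean document; each statement's English description precedes it below -/
import Mathlib

section
/- Let f be a nonzero homogeneous polynomial of degree d ≥ 3 in n variables with real coefficients, and let F = (1/d)∇f : ℂ^n → ℂ^n. Let ω = e^{iπ/(d−2)}. Define fix_ℝ(F) = fix(F) ∩ ℝ^n if d is odd, and fix_ℝ(F) = (fix(F) ∪ {conj(ω)·x : x ∈ fix(F)}) ∩ ℝ^n if d is even, where fix(F) = {x ∈ ℂ^n : F(x) = x}. Then ‖f‖_{σ,ℝ} = max{ |f(x)| / ‖x‖₂^d : x ∈ fix_ℝ(F) \ {0} }. -/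
open MvPolynomial

/-- The Euclidean (Hermitian) norm on `ℂⁿ`. -/
noncomputable def euclNorm {n : ℕ} (x : Fin n → ℂ) : ℝ :=
  Real.sqrt (∑ i, ‖x i‖ ^ 2)

/-- The Euclidean norm on `ℝⁿ`. -/
noncomputable def euclNormR {n : ℕ} (x : Fin n → ℝ) : ℝ :=
  Real.sqrt (∑ i, x i ^ 2)

/-- The real spectral norm of `f`: the supremum of `|f(x)|` over the unit sphere of `ℝⁿ`. -/
noncomputable def specNormR {n : ℕ} (f : MvPolynomial (Fin n) ℝ) : ℝ :=
  sSup {r : ℝ | ∃ x : Fin n → ℝ, euclNormR x = 1 ∧ r = |eval x f|}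

/-!
A maximiser `x₀` of `|f|` on the unit sphere exists by compactness, and `f(x₀) = c ≠ 0` since
`f ≠ 0`. Lagrange multipliers together with Euler's identity give `∇f(x₀) = d c x₀`, so by
homogeneity of the partial derivatives `F (s • x₀) = s ^ (d - 1) c x₀`, and `s • x₀` is a fixed
point as soon as `s ^ (d - 2) c = 1`. Such an `s` can be taken real unless `c < 0` and `d` is
even; then `s = ω t` with `t > 0` real works because `ω ^ (d - 2) = -1`, and `conj ω • s • x₀`
is the real point `t • x₀`. All these points have ratio `|f(x)| / ‖x‖ ^ d = |c|`, while every
nonzero real point has ratio at most `|c|` by homogeneity.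
-/

theorem IsMaxOn.isExtrOn_of_abs {α : Type*} {g : α → ℝ} {s : Set α} {a : α}
    (h : IsMaxOn (fun x => |g x|) s a) : IsExtrOn g s a := by
  rcases le_total 0 (g a) with ha | ha
  · refine Or.inr fun x hx => ?_
    have := isMaxOn_iff.1 h x hx
    simp only [Set.mem_ofPred_eq, abs_of_nonneg ha] at this ⊢
    exact (le_abs_self _).trans this
  · refine Or.inl fun x hx => ?_
    have := isMaxOn_iff.1 h x hx
    simp only [Set.mem_ofPred_eq, abs_of_nonpos ha] at this ⊢
    linarith [neg_abs_le (g x)]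

namespace MvPolynomial

variable {R σ : Type*} [CommSemiring R] {φ : MvPolynomial σ R} {d : ℕ}

theorem IsHomogeneous.eval_smul (h : φ.IsHomogeneous d) (c : R) (x : σ → R) :
    eval (c • x) φ = c ^ d * eval x φ := by
  simp only [eval_eq, Finset.mul_sum]
  refine Finset.sum_congr rfl fun m hm => ?_
  have hdeg : ∑ i ∈ m.support, m i = d := by
    simpa [Finsupp.weight_apply, Finsupp.sum] using h (mem_support_iff.1 hm)
  simp only [Pi.smul_apply, smul_eq_mul, mul_pow, Finset.prod_mul_distrib,
    Finset.prod_pow_eq_pow_sum, hdeg]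
  ring

theorem IsHomogeneous.eval_zero (h : φ.IsHomogeneous d) (hd : d ≠ 0) : eval 0 φ = 0 := by
  simpa [zero_pow hd] using h.eval_smul 0 0

theorem IsHomogeneous.sum_mul_eval_pderiv [Fintype σ] (h : φ.IsHomogeneous d) (x : σ → R) :
    ∑ i, x i * eval x (pderiv i φ) = d * eval x φ := by
  simpa [map_sum] using congrArg (eval x) h.sum_X_mul_pderiv

theorem hasStrictFDerivAt_eval {𝕜 : Type*} [NontriviallyNormedField 𝕜] [Fintype σ]
    (p : MvPolynomial σ 𝕜) (x : σ → 𝕜) :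
    HasStrictFDerivAt (fun u => eval u p)
      (∑ i, eval x (pderiv i p) • (ContinuousLinearMap.proj i : (σ → 𝕜) →L[𝕜] 𝕜)) x := by
  induction p using MvPolynomial.induction_on with
  | C a =>
    simp only [eval_C]
    refine (hasStrictFDerivAt_const a x).congr_fderiv ?_
    ext v
    simp
  | add p q hp hq =>
    simp only [map_add]
    refine (hp.add hq).congr_fderiv ?_
    ext v
    simp [add_mul, Finset.sum_add_distrib]
  | mul_X p i hp =>
    classical
    simp only [map_mul, eval_X]
    have hXi := (ContinuousLinearMap.proj i : (σ → 𝕜) →L[𝕜] 𝕜).hasStrictFDerivAt (x := x)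
    refine (hp.mul hXi).congr_fderiv ?_
    ext v
    simp [pderiv_X, Pi.single_apply, add_mul, Finset.sum_add_distrib, Finset.mul_sum, apply_ite,
      mul_assoc]

theorem IsHomogeneous.eval_pderiv_eq_of_isMaxOn_sphere [Fintype σ] {f : MvPolynomial σ ℝ}
    (hf : f.IsHomogeneous d) {x₀ : σ → ℝ} (hx₀ : ∑ i, x₀ i ^ 2 = 1)
    (hmax : IsMaxOn (fun u => |eval u f|) {u | ∑ i, u i ^ 2 = 1} x₀) (j : σ) :
    eval x₀ (pderiv j f) = d * eval x₀ f * x₀ j := by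
  classical
  set q : MvPolynomial σ ℝ := ∑ i, X i ^ 2
  have hq : ∀ u, eval u q = ∑ i, u i ^ 2 := fun u => by simp [q]
  have hq' : ∀ i, eval x₀ (pderiv i q) = 2 * x₀ i := fun i => by
    simp [q, pderiv_X, Pi.single_apply]
  have hextr : IsLocalExtrOn (fun u => eval u f) {u | eval u q = eval x₀ q} x₀ := by
    simpa only [hq, hx₀] using hmax.isExtrOn_of_abs.localize
  obtain ⟨a, b, hab, hlin⟩ := hextr.exists_multipliers_of_hasStrictFDerivAt_1d
    (hasStrictFDerivAt_eval q x₀) (hasStrictFDerivAt_eval f x₀)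
  have happ : ∀ v : σ → ℝ,
      2 * a * ∑ i, x₀ i * v i + b * ∑ i, eval x₀ (pderiv i f) * v i = 0 := by
    intro v
    simpa [hq', Finset.mul_sum, mul_assoc, mul_left_comm] using congrArg (fun L => L v) hlin
  have heuler : 2 * a + b * (d * eval x₀ f) = 0 := by
    simpa [← sq, hx₀, mul_comm _ (x₀ _), hf.sum_mul_eval_pderiv] using happ x₀
  have hb : b ≠ 0 := by
    rintro rfl
    exact hab (by simp_all)
  have hj : 2 * a * x₀ j + b * eval x₀ (pderiv j f) = 0 := by
    simpa [Pi.single_apply] using happ (Pi.single j 1)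
  apply mul_left_cancel₀ hb
  linear_combination hj - x₀ j * heuler

end MvPolynomial

section EuclideanNorm

variable {n : ℕ}

theorem euclNormR_eq_norm (x : Fin n → ℝ) :
    euclNormR x = ‖(WithLp.toLp 2 x : EuclideanSpace ℝ (Fin n))‖ := by
  simp [euclNormR, EuclideanSpace.norm_eq]

theorem euclNormR_smul (t : ℝ) (x : Fin n → ℝ) : euclNormR (t • x) = |t| * euclNormR x := by
  simp [euclNormR_eq_norm, norm_smul]

theorem euclNormR_pos {x : Fin n → ℝ} (hx : x ≠ 0) : 0 < euclNormR x := by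
  simpa [euclNormR_eq_norm] using hx

theorem euclNormR_eq_one_iff {x : Fin n → ℝ} : euclNormR x = 1 ↔ ∑ i, x i ^ 2 = 1 :=
  Real.sqrt_eq_one

theorem isCompact_euclNormR_eq_one : IsCompact {x : Fin n → ℝ | euclNormR x = 1} := by
  convert (isCompact_sphere (0 : EuclideanSpace ℝ (Fin n)) 1).image
    (PiLp.continuous_ofLp 2 _)
  ext x
  simp only [Set.mem_ofPred_eq, euclNormR_eq_norm, Set.mem_image, mem_sphere_iff_norm, sub_zero]
  exact ⟨fun h => ⟨_, h, rfl⟩, by rintro ⟨y, hy, rfl⟩; exact hy⟩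

theorem euclNorm_ofReal (u : Fin n → ℝ) : euclNorm (fun i => (u i : ℂ)) = euclNormR u := by
  simp [euclNorm, euclNormR]

end EuclideanNorm

section SpectralNorm

variable {n d : ℕ} {f : MvPolynomial (Fin n) ℝ}

theorem MvPolynomial.IsHomogeneous.abs_eval_smul_div_euclNormR_pow (hf : f.IsHomogeneous d)
    {t : ℝ} (ht : t ≠ 0) (x : Fin n → ℝ) :
    |eval (t • x) f| / euclNormR (t • x) ^ d = |eval x f| / euclNormR x ^ d := by
  rw [hf.eval_smul, euclNormR_smul, abs_mul, abs_pow, mul_pow,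
    mul_div_mul_left _ _ (pow_ne_zero d (abs_ne_zero.2 ht))]

theorem MvPolynomial.IsHomogeneous.abs_eval_div_euclNormR_pow_le (hf : f.IsHomogeneous d) {M : ℝ}
    (hM : ∀ u, euclNormR u = 1 → |eval u f| ≤ M) {x : Fin n → ℝ} (hx : x ≠ 0) :
    |eval x f| / euclNormR x ^ d ≤ M := by
  have hρ := euclNormR_pos hx
  have hunit : euclNormR ((euclNormR x)⁻¹ • x) = 1 := by
    rw [euclNormR_smul, abs_inv, abs_of_pos hρ, inv_mul_cancel₀ hρ.ne']
  rw [← hf.abs_eval_smul_div_euclNormR_pow (inv_ne_zero hρ.ne'), hunit, one_pow, div_one]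
  exact hM _ hunit

theorem MvPolynomial.IsHomogeneous.exists_euclNormR_eq_one_eval_ne_zero (hf : f.IsHomogeneous d)
    (hd : d ≠ 0) (hf0 : f ≠ 0) : ∃ u, euclNormR u = 1 ∧ eval u f ≠ 0 := by
  by_contra! h
  refine hf0 (MvPolynomial.funext fun x => ?_)
  rcases eq_or_ne x 0 with rfl | hx
  · simpa using hf.eval_zero hd
  have := hf.abs_eval_div_euclNormR_pow_le (M := 0) (fun u hu => by simp [h u hu]) hx
  rw [div_le_iff₀ (pow_pos (euclNormR_pos hx) d), zero_mul, abs_nonpos_iff] at this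
  simpa using this

theorem MvPolynomial.IsHomogeneous.exists_isMaxOn_abs_eval (hf : f.IsHomogeneous d) (hd : d ≠ 0)
    (hf0 : f ≠ 0) : ∃ x₀, euclNormR x₀ = 1 ∧
      IsMaxOn (fun u => |eval u f|) {u | euclNormR u = 1} x₀ ∧ eval x₀ f ≠ 0 := by
  obtain ⟨u, hu, hfu⟩ := hf.exists_euclNormR_eq_one_eval_ne_zero hd hf0
  obtain ⟨x₀, hx₀, hmax⟩ := isCompact_euclNormR_eq_one.exists_isMaxOn ⟨u, hu⟩
    (continuous_eval f).abs.continuousOn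
  refine ⟨x₀, hx₀, hmax, fun h => hfu ?_⟩
  simpa [h] using isMaxOn_iff.1 hmax u hu

theorem specNormR_eq_of_isMaxOn {x₀ : Fin n → ℝ} (hx₀ : euclNormR x₀ = 1)
    (hmax : IsMaxOn (fun u => |eval u f|) {u | euclNormR u = 1} x₀) :
    specNormR f = |eval x₀ f| :=
  IsGreatest.csSup_eq ⟨⟨x₀, hx₀, rfl⟩, by rintro r ⟨u, hu, rfl⟩; exact hmax hu⟩

end SpectralNorm

section FixedPoints

open Complex

variable {n d : ℕ} {f : MvPolynomial (Fin n) ℝ}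

theorem MvPolynomial.eval_map_ofReal (p : MvPolynomial (Fin n) ℝ) (u : Fin n → ℝ) :
    eval (fun i => (u i : ℂ)) (map (algebraMap ℝ ℂ) p) = eval u p := by
  simpa [eval_map, Function.comp_def] using
    (eval₂_comp_left (algebraMap ℝ ℂ) (RingHom.id ℝ) u p).symm

theorem MvPolynomial.norm_eval_map_ofReal_div_euclNorm_pow (p : MvPolynomial (Fin n) ℝ)
    (u : Fin n → ℝ) :
    ‖eval (fun i => (u i : ℂ)) (map (algebraMap ℝ ℂ) p)‖ / euclNorm (fun i => (u i : ℂ)) ^ d =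
      |eval u p| / euclNormR u ^ d := by
  rw [eval_map_ofReal, norm_real, Real.norm_eq_abs, euclNorm_ofReal]

theorem ofReal_vec_eq_zero_iff {u : Fin n → ℝ} : (fun i => (u i : ℂ)) = 0 ↔ u = 0 := by
  simp [funext_iff]

/-- The paper's `fix_ℝ(F)` is `extendedFixedPoints F d ω ∩ ℝⁿ`. -/
def extendedFixedPoints (F : (Fin n → ℂ) → Fin n → ℂ) (d : ℕ) (ω : ℂ) : Set (Fin n → ℂ) :=
  if Odd d then {x | F x = x} else {x | F x = x} ∪ (fun x => (starRingEnd ℂ) ω • x) '' {x | F x = x}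

theorem MvPolynomial.IsHomogeneous.smul_ofReal_isFixedPt (hf : f.IsHomogeneous d) (hd : 2 ≤ d)
    {F : (Fin n → ℂ) → Fin n → ℂ}
    (hF : ∀ x i, F x i = (1 / (d : ℂ)) * eval x (pderiv i (map (algebraMap ℝ ℂ) f)))
    {x₀ : Fin n → ℝ} (hgrad : ∀ j, eval x₀ (pderiv j f) = d * eval x₀ f * x₀ j) {s : ℂ}
    (hs : s ^ (d - 2) * eval x₀ f = 1) :
    F (s • fun i => (x₀ i : ℂ)) = s • fun i => (x₀ i : ℂ) := by
  have hd0 : (d : ℂ) ≠ 0 := Nat.cast_ne_zero.2 (by omega)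
  funext i
  rw [hF, ((hf.map _).pderiv).eval_smul, pderiv_map, eval_map_ofReal, hgrad,
    show d - 1 = d - 2 + 1 by omega]
  simp only [Pi.smul_apply, smul_eq_mul, ofReal_mul, ofReal_natCast]
  rw [one_div, inv_mul_eq_iff_eq_mul₀ hd0]
  linear_combination (d : ℂ) * s * x₀ i * hs

theorem exists_pos_pow_mul_eq_one {m : ℕ} (hm : m ≠ 0) {a : ℝ} (ha : 0 < a) :
    ∃ r : ℝ, 0 < r ∧ r ^ m * a = 1 :=
  ⟨a⁻¹ ^ (m : ℝ)⁻¹, by positivity, by rw [Real.rpow_inv_natCast_pow (by positivity) hm,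
    inv_mul_cancel₀ ha.ne']⟩

theorem Complex.exp_pi_mul_I_div_natCast_pow {m : ℕ} (hm : m ≠ 0) :
    exp ((Real.pi : ℂ) * I / m) ^ m = -1 := by
  rw [← exp_nat_mul, mul_div_cancel₀ _ (Nat.cast_ne_zero.2 hm), exp_pi_mul_I]

theorem Complex.conj_exp_pi_mul_I_div_mul_self (m : ℕ) :
    (starRingEnd ℂ) (exp ((Real.pi : ℂ) * I / m)) * exp ((Real.pi : ℂ) * I / m) = 1 := by
  rw [conj_mul', norm_exp]
  simp

theorem MvPolynomial.IsHomogeneous.exists_real_smul_mem_extendedFixedPoints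
    (hf : f.IsHomogeneous d) (hd : 3 ≤ d) {F : (Fin n → ℂ) → Fin n → ℂ}
    (hF : ∀ x i, F x i = (1 / (d : ℂ)) * eval x (pderiv i (map (algebraMap ℝ ℂ) f)))
    {x₀ : Fin n → ℝ} (hgrad : ∀ j, eval x₀ (pderiv j f) = d * eval x₀ f * x₀ j)
    (hc : eval x₀ f ≠ 0) :
    ∃ t : ℝ, t ≠ 0 ∧ ((t : ℂ) • fun i => (x₀ i : ℂ)) ∈
      extendedFixedPoints F d (exp ((Real.pi : ℂ) * I / ((d : ℂ) - 2))) := by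
  have hm : d - 2 ≠ 0 := by omega
  have hfix := fun s => hf.smul_ofReal_isFixedPt (by omega) hF hgrad (s := s)
  obtain ⟨r, hr, hrc⟩ := exists_pos_pow_mul_eq_one hm (abs_pos.2 hc)
  rcases hc.lt_or_gt with hneg | hpos
  · have hrcC : (r : ℂ) ^ (d - 2) * -(eval x₀ f : ℂ) = 1 := by
      exact_mod_cast abs_of_neg hneg ▸ hrc
    by_cases hodd : Odd d
    · refine ⟨-r, neg_ne_zero.2 hr.ne', ?_⟩
      rw [extendedFixedPoints, if_pos hodd]
      apply hfix
      rw [ofReal_neg, (Nat.Odd.sub_even (by omega) hodd even_two).neg_pow]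
      linear_combination hrcC
    · have hdm : (d : ℂ) - 2 = ((d - 2 : ℕ) : ℂ) := by
        rw [Nat.cast_sub (by omega)]
        norm_num
      rw [extendedFixedPoints, if_neg hodd, hdm]
      set ω := exp ((Real.pi : ℂ) * I / ((d - 2 : ℕ) : ℂ))
      refine ⟨r, hr.ne', Or.inr ⟨(ω * r) • fun i => (x₀ i : ℂ), hfix _ ?_, ?_⟩⟩
      · rw [mul_pow, exp_pi_mul_I_div_natCast_pow hm]
        linear_combination hrcC
      · change (starRingEnd ℂ) ω • (ω * r) • _ = _
        rw [smul_smul, ← mul_assoc, conj_exp_pi_mul_I_div_mul_self, one_mul]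
  · have hr_fix := hfix r (by exact_mod_cast abs_of_pos hpos ▸ hrc)
    refine ⟨r, hr.ne', ?_⟩
    unfold extendedFixedPoints
    split_ifs
    exacts [hr_fix, Or.inl hr_fix]

end FixedPoints

/-- For a nonzero homogeneous `f` of degree `d ≥ 3` with real coefficients, the real spectral
norm of `f` equals the maximum of `|f(x)|/‖x‖₂^d` over the nonzero real fixed points of
`F = (1/d)∇f`, where for even `d` one also rotates the fixed points by `conj ω`,
`ω = e^{iπ/(d-2)}`. -/
theorem stmt4 {n d : ℕ} (hd : 3 ≤ d) (f : MvPolynomial (Fin n) ℝ) (hf : f ≠ 0)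
    (hhom : f.IsHomogeneous d)
    (fC : MvPolynomial (Fin n) ℂ) (hfC : fC = MvPolynomial.map (algebraMap ℝ ℂ) f)
    (F : (Fin n → ℂ) → (Fin n → ℂ))
    (hF : ∀ x i, F x i = (1 / (d : ℂ)) * eval x (pderiv i fC))
    (ω : ℂ) (hω : ω = Complex.exp ((Real.pi : ℂ) * Complex.I / ((d : ℂ) - 2)))
    (fixR : Set (Fin n → ℂ))
    (hfixR : fixR = (if Odd d then {x | F x = x}
        else {x | F x = x} ∪ (fun x => (starRingEnd ℂ) ω • x) '' {x | F x = x}) ∩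
      {x | ∀ i, (x i).im = 0}) :
    IsGreatest {r : ℝ | ∃ x ∈ fixR, x ≠ 0 ∧
        r = ‖eval x fC‖ / euclNorm x ^ d}
      (specNormR f) := by
  subst hfC hω hfixR
  obtain ⟨x₀, hx₀, hmax, hc⟩ := hhom.exists_isMaxOn_abs_eval (by omega) hf
  have hgrad := hhom.eval_pderiv_eq_of_isMaxOn_sphere (euclNormR_eq_one_iff.1 hx₀)
    (by simpa only [euclNormR_eq_one_iff] using hmax)
  rw [specNormR_eq_of_isMaxOn hx₀ hmax]
  constructor
  · obtain ⟨t, ht, hmem⟩ := hhom.exists_real_smul_mem_extendedFixedPoints hd hF hgrad hc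
    have hx₀0 : x₀ ≠ 0 := by rintro rfl; simp [euclNormR] at hx₀
    have hcast : ((t : ℂ) • fun i => (x₀ i : ℂ)) = fun i => ((t • x₀) i : ℂ) := by ext i; simp
    refine ⟨_, ⟨hmem, fun i => by simp⟩, ?_, ?_⟩
    · rw [hcast, Ne, ofReal_vec_eq_zero_iff]
      exact smul_ne_zero ht hx₀0
    · rw [hcast, norm_eval_map_ofReal_div_euclNorm_pow, hhom.abs_eval_smul_div_euclNormR_pow ht,
        hx₀, one_pow, div_one]
  · rintro r ⟨x, ⟨-, hreal⟩, hx, rfl⟩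
    obtain ⟨u, rfl⟩ : ∃ u : Fin n → ℝ, x = fun i => (u i : ℂ) :=
      ⟨fun i => (x i).re, funext fun i => Complex.ext rfl (hreal i)⟩
    rw [norm_eval_map_ofReal_div_euclNorm_pow]
    exact hhom.abs_eval_div_euclNormR_pow_le (fun u hu => hmax hu) (mt ofReal_vec_eq_zero_iff.2 hx)
end

section
/- Assume all s_0,…,s_d are real and φ is not of the form A(z²+1)^{d/2} (so z·q(z) − p(z) is not the zero polynomial). Let R′ = {z ∈ ℝ : z·q(z) − p(z) = 0}. Then the real spectral norm of f satisfies ‖f‖_{σ,ℝ} = max{ |s_d| , max{ |φ(z)| / (1+z²)^{d/2} : z ∈ R′ } }. -/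
noncomputable section

/-- `p(z) = Σ_{j=0}^{d-1} C(d-1,j) s_{j+1} z^j`. -/
def pP (d : ℕ) (s : ℕ → ℂ) : Polynomial ℂ :=
  ∑ j ∈ Finset.range d, Polynomial.C (((d - 1).choose j : ℂ) * s (j + 1)) * Polynomial.X ^ j

/-- `q(z) = Σ_{j=0}^{d-1} C(d-1,j) s_j z^j`. -/
def qP (d : ℕ) (s : ℕ → ℂ) : Polynomial ℂ :=
  ∑ j ∈ Finset.range d, Polynomial.C (((d - 1).choose j : ℂ) * s j) * Polynomial.X ^ j

/-- `φ(z) = Σ_{j=0}^{d} C(d,j) s_j z^j`. -/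
def phiP (d : ℕ) (s : ℕ → ℂ) : Polynomial ℂ :=
  ∑ j ∈ Finset.range (d + 1), Polynomial.C ((d.choose j : ℂ) * s j) * Polynomial.X ^ j

/-- `f(x₁,x₂) = Σ_{j=0}^{d} C(d,j) s_j x₁^{d-j} x₂^j`. -/
def fval (d : ℕ) (s : ℕ → ℂ) (x₁ x₂ : ℂ) : ℂ :=
  ∑ j ∈ Finset.range (d + 1), (d.choose j : ℂ) * s j * x₁ ^ (d - j) * x₂ ^ j

/-- The real spectral norm of the binary form `f` (with real coefficients). -/
def specNorm2R (d : ℕ) (s : ℕ → ℂ) : ℝ :=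
  sSup {r : ℝ | ∃ x₁ x₂ : ℝ, x₁ ^ 2 + x₂ ^ 2 = 1 ∧
    r = ‖fval d s (x₁ : ℂ) (x₂ : ℂ)‖}

/-!
On the unit circle either `x₁ = 0`, where `|f| = |s_d|`, or `x₂ = z x₁` and
`|f(x)| = |φ(z)| / (1 + z²)^{d/2}`. So the maximum of `|f|` over the compact circle is `|s_d|` or
the maximum over `ℝ` of this ratio. At such a maximiser `z` with `φ(z) ≠ 0` the derivative of
`φ² / (1 + z²)^d` vanishes, i.e. `φ'(z) (1 + z²) = d z φ(z)`; as `φ' = d p` and `φ = q + X p`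
(Pascal's rule), this is `p(z) = z q(z)`. The coefficients are real, so the argument runs on the
real polynomials lifting `φ`, `p`, `q`.
-/

open Polynomial

theorem phiP_eq_qP_add_X_mul_pP {d : ℕ} (hd : 1 ≤ d) (s : ℕ → ℂ) :
    phiP d s = qP d s + X * pP d s := by
  obtain ⟨e, rfl⟩ := Nat.exists_eq_add_of_le' hd
  ext (_ | m)
  · simp [phiP, qP]
  · simp only [phiP, qP, pP, coeff_add, coeff_X_mul, finsetSum_coeff, coeff_C_mul_X_pow,
      Finset.sum_ite_eq, Finset.mem_range, Nat.add_sub_cancel, Nat.choose_succ_succ]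
    split_ifs <;> try omega
    · push_cast; ring
    · obtain rfl : m = e := by omega
      simp
    · simp

theorem derivative_phiP (d : ℕ) (s : ℕ → ℂ) :
    derivative (phiP d s) = C (d : ℂ) * pP d s := by
  ext n
  simp only [phiP, pP, coeff_derivative, finsetSum_coeff, coeff_C_mul, coeff_X_pow, mul_ite,
    mul_one, mul_zero, Finset.sum_ite_eq, Finset.mem_range]
  rcases d with _ | e
  · simp
  split_ifs <;> first | omega | simp
  have h : ((e + 1 : ℕ) : ℂ) * e.choose n = (e + 1).choose (n + 1) * (n + 1 : ℕ) := by
    exact_mod_cast Nat.add_one_mul_choose_eq e n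
  push_cast at h
  linear_combination -s (n + 1) * h

theorem fval_zero_left (d : ℕ) (s : ℕ → ℂ) (x : ℂ) : fval d s 0 x = s d * x ^ d := by
  rw [fval, Finset.sum_range_succ, Finset.sum_eq_zero fun j hj => ?_]
  · simp
  · simp [zero_pow (Nat.sub_ne_zero_of_lt (Finset.mem_range.mp hj))]

theorem fval_mul_right (d : ℕ) (s : ℕ → ℂ) (x z : ℂ) :
    fval d s x (x * z) = x ^ d * (phiP d s).eval z := by
  rw [fval, phiP, eval_finsetSum, Finset.mul_sum]
  refine Finset.sum_congr rfl fun j hj => ?_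
  rw [eval_C_mul, eval_X_pow, mul_pow, ← Nat.sub_add_cancel (Finset.mem_range_succ_iff.mp hj),
    pow_add, Nat.add_sub_cancel]
  ring

def circleValues (d : ℕ) (s : ℕ → ℂ) : Set ℝ :=
  {r : ℝ | ∃ x₁ x₂ : ℝ, x₁ ^ 2 + x₂ ^ 2 = 1 ∧ r = ‖fval d s (x₁ : ℂ) (x₂ : ℂ)‖}

theorem isCompact_unitCircle : IsCompact {p : ℝ × ℝ | p.1 ^ 2 + p.2 ^ 2 = 1} := by
  refine Metric.isCompact_of_isClosed_isBounded (isClosed_eq (by fun_prop) continuous_const) ?_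
  refine (Metric.isBounded_Icc (-1, -1) (1, 1)).subset fun p (hp : _ = _) => ?_
  have h₁ : |p.1| ≤ 1 := (sq_le_one_iff_abs_le_one _).mp (by nlinarith)
  have h₂ : |p.2| ≤ 1 := (sq_le_one_iff_abs_le_one _).mp (by nlinarith)
  exact ⟨⟨(abs_le.mp h₁).1, (abs_le.mp h₂).1⟩, ⟨(abs_le.mp h₁).2, (abs_le.mp h₂).2⟩⟩

theorem isGreatest_circleValues (d : ℕ) (s : ℕ → ℂ) :
    IsGreatest (circleValues d s) (specNorm2R d s) := by
  have himage : circleValues d s = (fun p : ℝ × ℝ => ‖fval d s p.1 p.2‖) ''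
      {p : ℝ × ℝ | p.1 ^ 2 + p.2 ^ 2 = 1} := by
    ext r
    simp only [circleValues, Set.mem_image, Set.mem_ofPred_eq, Prod.exists, eq_comm (a := r)]
  have hcompact : IsCompact (circleValues d s) :=
    himage ▸ isCompact_unitCircle.image (by unfold fval; fun_prop)
  exact hcompact.isGreatest_sSup ⟨_, 1, 0, by norm_num, rfl⟩

def phiRatio (d : ℕ) (s : ℕ → ℂ) (z : ℝ) : ℝ :=
  ‖(phiP d s).eval (z : ℂ)‖ / (1 + z ^ 2) ^ ((d : ℝ) / 2)

theorem norm_fval_eq_phiRatio (d : ℕ) (s : ℕ → ℂ) {a b : ℝ} (hab : a ^ 2 + b ^ 2 = 1)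
    (ha : a ≠ 0) : ‖fval d s a b‖ = phiRatio d s (b / a) := by
  have hb : (b : ℂ) = a * (b / a : ℝ) := by rw [← Complex.ofReal_mul, mul_div_cancel₀ b ha]
  have hsqrt : √(1 + (b / a) ^ 2) = |a|⁻¹ := by
    rw [← abs_inv, ← Real.sqrt_sq_eq_abs]
    congr 1
    field_simp
    linarith
  rw [phiRatio, Real.rpow_div_two_eq_sqrt _ (by positivity), Real.rpow_natCast, hsqrt, hb,
    fval_mul_right, norm_mul, norm_pow, Complex.norm_real, Real.norm_eq_abs, inv_pow,
    div_inv_eq_mul, mul_comm]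

theorem phiRatio_mem_circleValues (d : ℕ) (s : ℕ → ℂ) (z : ℝ) :
    phiRatio d s z ∈ circleValues d s := by
  have hab : (√(1 + z ^ 2))⁻¹ ^ 2 + (z * (√(1 + z ^ 2))⁻¹) ^ 2 = 1 := by
    rw [mul_pow, inv_pow, Real.sq_sqrt (by positivity)]
    field_simp
  have ha : (√(1 + z ^ 2))⁻¹ ≠ 0 := inv_ne_zero (by positivity)
  refine ⟨_, _, hab, ?_⟩
  rw [norm_fval_eq_phiRatio d s hab ha, mul_div_cancel_right₀ _ ha]

theorem norm_s_mem_circleValues (d : ℕ) (s : ℕ → ℂ) : ‖s d‖ ∈ circleValues d s :=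
  ⟨0, 1, by norm_num, by simp [fval_zero_left]⟩

theorem norm_fval_zero_left_of_sq_eq_one (d : ℕ) (s : ℕ → ℂ) {b : ℝ} (hb : b ^ 2 = 1) :
    ‖fval d s 0 b‖ = ‖s d‖ := by
  rw [fval_zero_left, norm_mul, norm_pow, Complex.norm_real, Real.norm_eq_abs,
    ← Real.sqrt_sq_eq_abs, hb, Real.sqrt_one, one_pow, mul_one]

theorem mul_one_add_sq_eq_of_isLocalMax {u : ℝ → ℝ} {u' z₀ : ℝ} (n : ℕ) (hu : HasDerivAt u u' z₀)
    (hmax : IsLocalMax (fun z => u z ^ 2 / (1 + z ^ 2) ^ n) z₀) (hu0 : u z₀ ≠ 0) :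
    u' * (1 + z₀ ^ 2) = n * z₀ * u z₀ := by
  have hw : HasDerivAt (fun z : ℝ => 1 + z ^ 2) (2 * z₀) z₀ := by
    simpa using (hasDerivAt_pow 2 z₀).const_add 1
  have hv : (1 + z₀ ^ 2) ^ n ≠ 0 := by positivity
  have h0 := hmax.hasDerivAt_eq_zero ((hu.fun_pow 2).div (hw.pow n) hv)
  rw [div_eq_zero_iff, or_iff_left (pow_ne_zero 2 hv)] at h0
  have hpow : (n : ℝ) * (1 + z₀ ^ 2) ^ (n - 1) * (1 + z₀ ^ 2) = n * (1 + z₀ ^ 2) ^ n := by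
    rcases n with _ | n <;> simp [pow_succ, mul_assoc]
  have key : 2 * u z₀ * (1 + z₀ ^ 2) ^ n * (u' * (1 + z₀ ^ 2) - n * z₀ * u z₀) = 0 := by
    linear_combination (1 + z₀ ^ 2) * h0 + 2 * z₀ * u z₀ ^ 2 * hpow
  simpa [hu0, hv, sub_eq_zero] using key

theorem sum_C_mul_X_pow_mem_lifts {a : ℕ → ℂ} (ha : ∀ j, (a j).im = 0) (n : ℕ) :
    ∑ j ∈ Finset.range n, C (a j) * X ^ j ∈ lifts (algebraMap ℝ ℂ) :=
  Subsemiring.sum_mem _ fun j _ =>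
    Subsemiring.mul_mem _ (C'_mem_lifts ⟨(a j).re, Complex.ext (by simp) (by simp [ha])⟩)
      (X_pow_mem_lifts _ j)

theorem eval_map_ofReal (R : ℝ[X]) (x : ℝ) :
    (R.map (algebraMap ℝ ℂ)).eval (x : ℂ) = R.eval x :=
  eval_map_apply (algebraMap ℝ ℂ) x

theorem rpow_natCast_div_two_sq {x : ℝ} (hx : 0 ≤ x) (n : ℕ) : (x ^ ((n : ℝ) / 2)) ^ 2 = x ^ n := by
  rw [Real.rpow_div_two_eq_sqrt _ hx, Real.rpow_natCast, ← pow_mul, mul_comm, pow_mul,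
    Real.sq_sqrt hx]

theorem eval_X_mul_qP_sub_pP_eq_zero {d : ℕ} (hd : 1 ≤ d) {s : ℕ → ℂ} (hs : ∀ j, (s j).im = 0)
    {z₀ : ℝ} (hmax : ∀ z, phiRatio d s z ≤ phiRatio d s z₀)
    (hφ : (phiP d s).eval (z₀ : ℂ) ≠ 0) :
    (X * qP d s - pP d s).eval (z₀ : ℂ) = 0 := by
  obtain ⟨P, hP⟩ : ∃ P : ℝ[X], P.map (algebraMap ℝ ℂ) = pP d s :=
    (mem_lifts _).mp (sum_C_mul_X_pow_mem_lifts (fun j => by simp [hs]) d)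
  obtain ⟨Q, hQ⟩ : ∃ Q : ℝ[X], Q.map (algebraMap ℝ ℂ) = qP d s :=
    (mem_lifts _).mp (sum_C_mul_X_pow_mem_lifts (fun j => by simp [hs]) d)
  obtain ⟨Φ, hΦ⟩ : ∃ Φ : ℝ[X], Φ.map (algebraMap ℝ ℂ) = phiP d s :=
    (mem_lifts _).mp (sum_C_mul_X_pow_mem_lifts (fun j => by simp [hs]) (d + 1))
  have hΦ_eq : Φ = Q + X * P := map_injective _ (algebraMap ℝ ℂ).injective <| by
    simp [hP, hQ, hΦ, phiP_eq_qP_add_X_mul_pP hd]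
  have hΦ_deriv : derivative Φ = C (d : ℝ) * P := map_injective _ (algebraMap ℝ ℂ).injective <| by
    rw [← derivative_map, hΦ, derivative_phiP]
    simp [hP]
  have hratio : ∀ z, phiRatio d s z ^ 2 = Φ.eval z ^ 2 / (1 + z ^ 2) ^ d := fun z => by
    rw [phiRatio, div_pow, ← hΦ, eval_map_ofReal, Complex.norm_real, Real.norm_eq_abs, sq_abs,
      rpow_natCast_div_two_sq (by positivity)]
  have hlocal : IsLocalMax (fun z => Φ.eval z ^ 2 / (1 + z ^ 2) ^ d) z₀ :=
    Filter.Eventually.of_forall fun z => by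
      simp only [← hratio]
      exact pow_le_pow_left₀ (by unfold phiRatio; positivity) (hmax z) 2
  have hcrit := mul_one_add_sq_eq_of_isLocalMax d (Φ.hasDerivAt z₀) hlocal
    (by rwa [← hΦ, eval_map_ofReal, Complex.ofReal_ne_zero] at hφ)
  rw [hΦ_deriv, hΦ_eq] at hcrit
  simp only [eval_mul, eval_C, eval_add, eval_X] at hcrit
  have hPQ : P.eval z₀ = z₀ * Q.eval z₀ := by
    have hd0 : (d : ℝ) ≠ 0 := by positivity
    apply mul_left_cancel₀ hd0
    linear_combination hcrit
  rw [← hP, ← hQ, eval_sub, eval_mul, eval_X, eval_map_ofReal, eval_map_ofReal, hPQ]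
  push_cast
  ring

theorem stmt15_general (d : ℕ) (hd : 3 ≤ d) (s : ℕ → ℂ) (hs : ∀ j, (s j).im = 0) :
    IsGreatest (({‖s d‖} : Set ℝ) ∪
        {r : ℝ | ∃ z : ℝ, (Polynomial.X * qP d s - pP d s).eval (z : ℂ) = 0 ∧
          r = ‖(phiP d s).eval (z : ℂ)‖ / (1 + z ^ 2) ^ ((d : ℝ) / 2)})
      (specNorm2R d s) := by
  obtain ⟨⟨a, b, hab, hM⟩, hub⟩ := isGreatest_circleValues d s
  have hsd : ‖s d‖ ≤ specNorm2R d s := hub (norm_s_mem_circleValues d s)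
  refine ⟨?_, ?_⟩
  · by_cases ha : a = 0
    · subst ha
      left
      rw [hM, Complex.ofReal_zero, norm_fval_zero_left_of_sq_eq_one d s (by linarith)]
      rfl
    rw [norm_fval_eq_phiRatio d s hab ha] at hM
    by_cases hφ : (phiP d s).eval ((b / a : ℝ) : ℂ) = 0
    · left
      exact le_antisymm (by rw [hM, phiRatio, hφ]; simp) hsd
    · right
      exact ⟨b / a, eval_X_mul_qP_sub_pP_eq_zero (by omega) hs
        (fun z => hM ▸ hub (phiRatio_mem_circleValues d s z)) hφ, hM⟩
  · rintro r (rfl | ⟨z, -, rfl⟩)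
    exacts [hsd, hub (phiRatio_mem_circleValues d s z)]

/-- For real coefficients `s` with `φ` not of the exceptional form `A (z²+1)^{d/2}`,
`‖f‖_{σ,ℝ} = max { |s_d|, max_{z ∈ R'} |φ(z)|/(1+z²)^{d/2} }`, where `R'` is the set of
real roots of `z q(z) - p(z)`. -/
theorem stmt15 (d : ℕ) (hd : 3 ≤ d) (s : ℕ → ℂ) (hs : ∀ j, (s j).im = 0)
    (h : ¬ (Even d ∧ ∃ A : ℝ, phiP d s =
      Polynomial.C (A : ℂ) * (Polynomial.X ^ 2 + 1) ^ (d / 2))) :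
    IsGreatest (({‖s d‖} : Set ℝ) ∪
        {r : ℝ | ∃ z : ℝ, (Polynomial.X * qP d s - pP d s).eval (z : ℂ) = 0 ∧
          r = ‖(phiP d s).eval (z : ℂ)‖ / (1 + z ^ 2) ^ ((d : ℝ) / 2)})
      (specNorm2R d s) :=
  stmt15_general d hd s hs
end
end
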